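/- For any 1 ≤ i ≤ N−1, with w treated as a constant parameter, the operator T_i(1) = T_i + t^{-1} satisfies, as an identity of rational functions in w, z_i, z_{i+1}: T_i(1)[ (t z_i − t^{-1} z_{i+1}) / ((w − z_i)(t w − t^{-1} z_{i+1})) ] = (t z_i − t^{-1} z_{i+1}) · ( 1/((w − z_i)(w − z_{i+1})) + 1/((t w − t^{-1} z_i)(t w − t^{-1} z_{i+1})) ). -/

import Mathlib

open MvPolynomial Finset

noncomputable section

/-- Variable set: `m+1` parameters (index `0` is the indeterminate `t`, the others are
extra invertible indeterminates such as `t^{u_k}`), `N` variables `z_0, …, z_{N-1}`,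
and `r` auxiliary variables `w_0, …, w_{r-1}`. -/
abbrev Var (m N r : ℕ) : Type := (Fin (m + 1) ⊕ Fin N) ⊕ Fin r

/-- The polynomial ring over `ℚ` on those variables. -/
abbrev PR (m N r : ℕ) : Type := MvPolynomial (Var m N r) ℚ

/-- The field of rational functions over `ℚ` in the parameters, the `z`'s and the `w`'s. -/
abbrev FF (m N r : ℕ) : Type := FractionRing (PR m N r)

variable (m N r : ℕ)

/-- The parameter with index `k` (so `pa m N r 0` is `t`). -/
def pa (k : Fin (m + 1)) : FF m N r :=
  algebraMap (PR m N r) (FF m N r) (X (Sum.inl (Sum.inl k)))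

/-- The indeterminate `t`. -/
def tt' : FF m N r := pa m N r 0

/-- The variable `z_k` (`0`-indexed; junk value `0` if `k ≥ N`). -/
def zn (k : ℕ) : FF m N r :=
  if h : k < N then algebraMap (PR m N r) (FF m N r) (X (Sum.inl (Sum.inr ⟨k, h⟩))) else 0

/-- The variable `w_k` (`0`-indexed; junk value `0` if `k ≥ r`). -/
def wv (k : ℕ) : FF m N r :=
  if h : k < r then algebraMap (PR m N r) (FF m N r) (X (Sum.inr ⟨k, h⟩)) else 0

/-- The field automorphism `s_i` exchanging `z_i` and `z_{i+1}` (identity if `i + 1 ≥ N`). -/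
def sw (i : ℕ) : FF m N r ≃+* FF m N r :=
  if h : i + 1 < N then
    IsFractionRing.ringEquivOfRingEquiv
      ((renameEquiv ℚ (Equiv.swap ((Sum.inl (Sum.inr (⟨i, Nat.lt_of_succ_lt h⟩ : Fin N))) : Var m N r)
          (Sum.inl (Sum.inr (⟨i + 1, h⟩ : Fin N))))).toRingEquiv)
  else RingEquiv.refl _

/-- The Hecke algebra generator `T_i` in the polynomial representation (`0`-indexed:
`T_i f = ((t z_i - t⁻¹ z_{i+1})/(z_i - z_{i+1})) (f - s_i f) - t⁻¹ f`). -/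
def TT (i : ℕ) (f : FF m N r) : FF m N r :=
  (tt' m N r * zn m N r i - (tt' m N r)⁻¹ * zn m N r (i + 1)) / (zn m N r i - zn m N r (i + 1)) *
      (f - sw m N r i f) - (tt' m N r)⁻¹ * f

/-- The `t`-number `[u] = (t^u - t^{-u})/(t - t⁻¹)`, where `a` stands for `t^u`. -/
def tnum (a : FF m N r) : FF m N r := (a - a⁻¹) / (tt' m N r - (tt' m N r)⁻¹)

/-- The Baxterised operator `T_i(u) = T_i + (t^{-u}/[u]) id`, where `a` stands for `t^u`. -/
def TB (i : ℕ) (a : FF m N r) (f : FF m N r) : FF m N r :=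
  TT m N r i f + a⁻¹ / tnum m N r a * f

/-- The `t`-Vandermonde `Δ_t(z_a, …, z_{b-1}) = ∏_{a ≤ i < j < b} (t z_i - t⁻¹ z_j)`. -/
def Delt (a b : ℕ) : FF m N r :=
  ∏ j ∈ Finset.Ico a b, ∏ i ∈ Finset.Ico a j,
    (tt' m N r * zn m N r i - (tt' m N r)⁻¹ * zn m N r j)

/-- The Bethe wave function `φ_i(w) = ∏_{k<i} (w - z_k)⁻¹ ∏_{i ≤ k < N} (t w - t⁻¹ z_k)⁻¹`. -/
def phiF (i : ℕ) (w : FF m N r) : FF m N r :=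
  (∏ k ∈ Finset.range i, (w - zn m N r k))⁻¹ *
    (∏ k ∈ Finset.Ico i N, (tt' m N r * w - (tt' m N r)⁻¹ * zn m N r k))⁻¹

/-- Substitution `w_k := a`, computed on the reduced numerator and denominator. -/
def subW (k : ℕ) (a : FF m N r) (F : FF m N r) : FF m N r :=
  if h : k < r then
    aeval (fun v : Var m N r =>
        if v = Sum.inr (⟨k, h⟩ : Fin r) then a else algebraMap (PR m N r) (FF m N r) (X v))
      (IsFractionRing.num (PR m N r) F) /
    aeval (fun v : Var m N r =>
        if v = Sum.inr (⟨k, h⟩ : Fin r) then a else algebraMap (PR m N r) (FF m N r) (X v))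
      ((IsFractionRing.den (PR m N r) F) : PR m N r)
  else F

/-- The residue in `w_k` at `a` of a function with at most a simple pole there:
`((w_k - a) F)|_{w_k = a}`. -/
def resW (k : ℕ) (a : FF m N r) (F : FF m N r) : FF m N r :=
  subW m N r k a ((wv m N r k - a) * F)

/-- The contour integral `∮ F dw_k/(2πi)`: the sum of the residues at `z_0, …, z_{N-1}`. -/
def cint (k : ℕ) (F : FF m N r) : FF m N r :=
  ∑ j ∈ Finset.range N, resW m N r k (zn m N r j) F

/-- The iterated contour integral `∮⋯∮ F dw_0 ⋯ dw_{r-1}`,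
evaluated one variable at a time (`w_0` first). -/
def iInt (F : FF m N r) : FF m N r :=
  (List.range r).foldl (fun G k => cint m N r k G) F

/-- The string of Baxterised operators
`rowOps e c tv = T_{e+c-1}(v+1) ∘ T_{e+c-2}(v+2) ∘ ⋯ ∘ T_e(v+c)` (with `tv = t^v`). -/
def rowOps (e : ℕ) : ℕ → FF m N r → FF m N r → FF m N r
  | 0, _, f => f
  | c + 1, tv, f => TB m N r (e + c) (tv * tt' m N r) (rowOps e c (tv * tt' m N r) f)

/-- Application of the operators of the `i`-th row (from the top) of a Young diagram,
boxes `(i,1), …, (i,c)`, the box `(i,j)` contributing `T_{n+j-i}(…)` (`1`-indexed, so the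
Baxterised operator with `0`-indexed label `n+j-i-1`), the box `(i,1)` acting first;
`lab i j` stands for `t` raised to the spectral parameter of box `(i,j)`. -/
def rowApply (n : ℕ) (lab : ℕ → ℕ → FF m N r) (i : ℕ) : ℕ → FF m N r → FF m N r
  | 0, f => f
  | j + 1, f => TB m N r (n + (j + 1) - i - 1) (lab i (j + 1)) (rowApply n lab i j f)

/-- Application of all box operators of the Young diagram of `lam` (row `i` from the top
having `lam (n-i)` boxes), the rows being applied from top to bottom. This realises the
product `∏_{(i,j) ∈ λ} T_{n+j-i}(…)` where the operator of box `(i,j)` acts before those of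
boxes `(i+1,j)` and `(i,j+1)`. -/
def boxApply (n : ℕ) (lam : ℕ → ℕ) (lab : ℕ → ℕ → FF m N r) : ℕ → FF m N r → FF m N r
  | 0, f => f
  | i + 1, f => rowApply m N r n lab (i + 1) (lam (n - (i + 1))) (boxApply n lam lab i f)

/-- `ΔΔ = Δ_t(z_1,…,z_n) Δ_t(z_{n+1},…,z_{2n})` (here `N = 2n`). -/
def DDl (n : ℕ) : FF m N r := Delt m N r 0 n * Delt m N r n (2 * n)

/-- The deformed specialised Macdonald polynomial `M_λ(u_1, …, u_{n-1})`:
the box `(i,j)` of `λ` contributes `T_{n+j-i}(u_{n-i} + n - i - j + 1)`;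
`tu k` stands for `t^{u_k}`. -/
def Mac (n : ℕ) (lam : ℕ → ℕ) (tu : ℕ → FF m N r) : FF m N r :=
  boxApply m N r n lam (fun i j => tu (n - i) * tt' m N r ^ (n - i - j + 1)) (n - 1)
    (DDl m N r n)

/-- The Kazhdan-Lusztig labels: `v_{ij} = max (v_{i+1,j}, v_{i,j+1}) + 1` for a box of `λ`,
and `0` outside of `λ` (computed with fuel). -/
def klv (n : ℕ) (lam : ℕ → ℕ) : ℕ → ℕ → ℕ → ℕ
  | 0, _, _ => 0
  | fuel + 1, i, j =>
      if 1 ≤ i ∧ i ≤ n - 1 ∧ 1 ≤ j ∧ j ≤ lam (n - i) then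
        max (klv n lam fuel (i + 1) j) (klv n lam fuel i (j + 1)) + 1
      else 0

/-- The Kazhdan-Lusztig label of box `(i,j)`. -/
def klLabel (n : ℕ) (lam : ℕ → ℕ) (i j : ℕ) : ℕ := klv n lam (2 * n) i j

/-- The Kazhdan-Lusztig element `KL_λ = (∏_{(i,j) ∈ λ} T_{n+j-i}(v_{ij})) ΔΔ`. -/
def KL (n : ℕ) (lam : ℕ → ℕ) : FF m N r :=
  boxApply m N r n lam (fun i j => tt' m N r ^ klLabel n lam i j) (n - 1) (DDl m N r n)

/-- Evaluation `z_1 = ⋯ = z_N = 1`, computed on the reduced numerator and denominator. -/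
def evalZ (F : FF m N r) : FF m N r :=
  aeval (fun v : Var m N r =>
      match v with
      | Sum.inl (Sum.inr _) => 1
      | v => algebraMap (PR m N r) (FF m N r) (X v))
    (IsFractionRing.num (PR m N r) F) /
  aeval (fun v : Var m N r =>
      match v with
      | Sum.inl (Sum.inr _) => 1
      | v => algebraMap (PR m N r) (FF m N r) (X v))
    ((IsFractionRing.den (PR m N r) F) : PR m N r)

variable {R : Type*} [CommRing R]

/-- The polynomial `∏_{k=0}^{n-1} (1 + y_k x_{k+1}) ∏_{1 ≤ i < j ≤ n} (x_j - x_i)(1 + x_i x_j + τ x_j)`. -/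
def Apoly (n : ℕ) (τ : R) (y : ℕ → R) : MvPolynomial (Fin n) R :=
  (∏ k : Fin n, (1 + MvPolynomial.C (y (k : ℕ)) * MvPolynomial.X k)) *
    ∏ p ∈ Finset.univ.filter (fun p : Fin n × Fin n => p.1 < p.2),
      (MvPolynomial.X p.2 - MvPolynomial.X p.1) *
        (1 + MvPolynomial.X p.1 * MvPolynomial.X p.2 + MvPolynomial.C τ * MvPolynomial.X p.2)

/-- The constant term
`A_{a_1,…,a_{n-1}}(τ, y_1, …, y_{n-1}) = CT(∏ (1 + y_k x_{k+1}) x_{k+1}^{-a_k+1} ∏_{i<j} (x_j-x_i)(1+x_i x_j+τ x_j))`,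
extracted as the coefficient of `∏ x_{k+1}^{a_k - 1}`. -/
def Act (n : ℕ) (τ : R) (y : ℕ → R) (a : ℕ → ℕ) : R :=
  MvPolynomial.coeff (Finsupp.equivFunOnFinite.symm fun k : Fin n => a (k : ℕ) - 1)
    (Apoly n τ y)

/-- The TSSCPP constant term
`N(t_0,…,t_{n-1}) = CT(∏_{i<j} (x_j-x_i)(1+t_i x_j)/(1-x_i x_j) ∏_i (1+t_0 x_i) x_i^{-2i+2}/(1-x_i²))`. -/
def Nct (n : ℕ) (tv : ℕ → R) : R :=
  MvPowerSeries.coeff (R := R) (Finsupp.equivFunOnFinite.symm fun k : Fin n => 2 * (k : ℕ))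
    ((∏ p ∈ Finset.univ.filter (fun p : Fin n × Fin n => p.1 < p.2),
        ((MvPowerSeries.X p.2 - MvPowerSeries.X p.1) *
          (1 + MvPowerSeries.C (σ := Fin n) (R := R) (tv ((p.1 : ℕ) + 1)) * MvPowerSeries.X p.2) *
          MvPowerSeries.invOfUnit (1 - MvPowerSeries.X p.1 * MvPowerSeries.X p.2) 1)) *
      ∏ k : Fin n,
        ((1 + MvPowerSeries.C (σ := Fin n) (R := R) (tv 0) * MvPowerSeries.X k) *
          MvPowerSeries.invOfUnit (1 - MvPowerSeries.X k ^ 2) 1))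

/-! `T_i(1) = T_i + t⁻¹` cancels the `-t⁻¹` of `T_i`, so `T_i(1)` is the divided difference
`f ↦ Δ_t(z_i, z_{i+1}) (f - s_i f) / (z_i - z_{i+1})`. Applied to the given function, the
numerator of `f - s_i f` factors as `(z_i - z_{i+1})` times the sum of the two denominators on the
right-hand side, and the factor `z_i - z_{i+1}` cancels. -/

theorem hecke_wavefunction_numerator_identity {t s w a b : R} (hts : t * s = 1) :
    (t * a - s * b) * ((w - b) * (t * w - s * a)) - (w - a) * (t * w - s * b) * (t * b - s * a) =
      (a - b) * ((t * w - s * a) * (t * w - s * b) + (w - a) * (w - b)) := by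
  linear_combination (a - b) * (w - a) * (w - b) * hts

theorem hecke_divided_difference_wavefunction {K : Type*} [Field K] {t s w a b : K}
    (hts : t * s = 1) (hab : a - b ≠ 0) (hwa : w - a ≠ 0) (hwb : w - b ≠ 0)
    (hta : t * w - s * a ≠ 0) (htb : t * w - s * b ≠ 0) :
    (t * a - s * b) / (a - b) *
        ((t * a - s * b) / ((w - a) * (t * w - s * b)) -
          (t * b - s * a) / ((w - b) * (t * w - s * a))) =
      (t * a - s * b) * (1 / ((w - a) * (w - b)) + 1 / ((t * w - s * a) * (t * w - s * b))) := by
  rw [div_sub_div _ _ (mul_ne_zero hwa htb) (mul_ne_zero hwb hta),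
    hecke_wavefunction_numerator_identity hts, div_mul_div_comm,
    div_add_div _ _ (mul_ne_zero hwa hwb) (mul_ne_zero hta htb), ← mul_div_assoc,
    div_eq_div_iff (mul_ne_zero hab (mul_ne_zero (mul_ne_zero hwa htb) (mul_ne_zero hwb hta)))
      (mul_ne_zero (mul_ne_zero hwa hwb) (mul_ne_zero hta htb))]
  ring

theorem MvPolynomial.algebraMap_fractionRing_ne_zero_of_eval {σ S : Type*} [CommRing S]
    [IsDomain S] {p : MvPolynomial σ S} (x : σ → S) (h : eval x p ≠ 0) :
    algebraMap (MvPolynomial σ S) (FractionRing (MvPolynomial σ S)) p ≠ 0 :=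
  (map_ne_zero_iff _ (IsFractionRing.injective _ _)).mpr fun hp => h (by simp [hp])

section

variable {m N r}

theorem tt'_eq_algebraMap :
    tt' m N r = algebraMap (PR m N r) (FF m N r) (X (Sum.inl (Sum.inl 0))) :=
  rfl

theorem zn_of_lt {k : ℕ} (hk : k < N) :
    zn m N r k = algebraMap (PR m N r) (FF m N r) (X (Sum.inl (Sum.inr ⟨k, hk⟩))) :=
  dif_pos hk

theorem wv_of_lt {k : ℕ} (hk : k < r) :
    wv m N r k = algebraMap (PR m N r) (FF m N r) (X (Sum.inr ⟨k, hk⟩)) :=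
  dif_pos hk

theorem tt'_ne_zero : tt' m N r ≠ 0 :=
  (map_ne_zero_iff _ (IsFractionRing.injective _ _)).mpr (X_ne_zero _)

theorem tt'_sub_inv_ne_zero : tt' m N r - (tt' m N r)⁻¹ ≠ 0 := by
  have hsq : tt' m N r * tt' m N r - 1 ≠ 0 := by
    rw [show tt' m N r * tt' m N r - 1 = algebraMap (PR m N r) (FF m N r)
        (X (Sum.inl (Sum.inl 0)) * X (Sum.inl (Sum.inl 0)) - 1) by simp [tt'_eq_algebraMap]]
    exact algebraMap_fractionRing_ne_zero_of_eval 0 (by simp)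
  convert mul_ne_zero hsq (inv_ne_zero (tt'_ne_zero (m := m) (N := N) (r := r))) using 1
  field_simp

theorem zn_sub_zn_ne_zero {k l : ℕ} (hk : k < N) (hl : l < N) (hkl : k ≠ l) :
    zn m N r k - zn m N r l ≠ 0 := by
  rw [zn_of_lt hk, zn_of_lt hl, ← map_sub]
  refine algebraMap_fractionRing_ne_zero_of_eval (Pi.single (Sum.inl (Sum.inr ⟨l, hl⟩)) 1) ?_
  simp [hkl]

theorem wv_sub_zn_ne_zero {j k : ℕ} (hj : j < r) (hk : k < N) : wv m N r j - zn m N r k ≠ 0 := by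
  rw [wv_of_lt hj, zn_of_lt hk, ← map_sub]
  refine algebraMap_fractionRing_ne_zero_of_eval (Pi.single (Sum.inl (Sum.inr ⟨k, hk⟩)) 1) ?_
  simp

theorem tt'_mul_wv_sub_ne_zero {j k : ℕ} (hj : j < r) (hk : k < N) :
    tt' m N r * wv m N r j - (tt' m N r)⁻¹ * zn m N r k ≠ 0 := by
  have hsq : tt' m N r * tt' m N r * wv m N r j - zn m N r k ≠ 0 := by
    rw [tt'_eq_algebraMap, wv_of_lt hj, zn_of_lt hk, ← map_mul, ← map_mul, ← map_sub]
    refine algebraMap_fractionRing_ne_zero_of_eval (Pi.single (Sum.inl (Sum.inr ⟨k, hk⟩)) 1) ?_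
    simp
  convert mul_ne_zero hsq (inv_ne_zero (tt'_ne_zero (m := m) (N := N) (r := r))) using 1
  field_simp

theorem sw_algebraMap_X {i : ℕ} (h : i + 1 < N) (v : Var m N r) :
    sw m N r i (algebraMap (PR m N r) (FF m N r) (X v)) =
      algebraMap (PR m N r) (FF m N r)
        (X (Equiv.swap (Sum.inl (Sum.inr ⟨i, Nat.lt_of_succ_lt h⟩)) (Sum.inl (Sum.inr ⟨i + 1, h⟩))
          v)) := by
  rw [sw, dif_pos h, IsFractionRing.ringEquivOfRingEquiv_algebraMap]
  simp

theorem sw_tt' (i : ℕ) : sw m N r i (tt' m N r) = tt' m N r := by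
  by_cases h : i + 1 < N
  · rw [tt'_eq_algebraMap, sw_algebraMap_X h, Equiv.swap_apply_of_ne_of_ne] <;> simp
  · simp [sw, h]

theorem sw_wv (i : ℕ) {j : ℕ} (hj : j < r) : sw m N r i (wv m N r j) = wv m N r j := by
  by_cases h : i + 1 < N
  · rw [wv_of_lt hj, sw_algebraMap_X h, Equiv.swap_apply_of_ne_of_ne] <;> simp
  · simp [sw, h]

theorem sw_zn_self {i : ℕ} (h : i + 1 < N) : sw m N r i (zn m N r i) = zn m N r (i + 1) := by
  rw [zn_of_lt (Nat.lt_of_succ_lt h), sw_algebraMap_X h, Equiv.swap_apply_left, zn_of_lt h]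

theorem sw_zn_succ {i : ℕ} (h : i + 1 < N) : sw m N r i (zn m N r (i + 1)) = zn m N r i := by
  rw [zn_of_lt h, sw_algebraMap_X h, Equiv.swap_apply_right, zn_of_lt (Nat.lt_of_succ_lt h)]

theorem TB_tt' (i : ℕ) (f : FF m N r) :
    TB m N r i (tt' m N r) f =
      (tt' m N r * zn m N r i - (tt' m N r)⁻¹ * zn m N r (i + 1)) /
        (zn m N r i - zn m N r (i + 1)) * (f - sw m N r i f) := by
  rw [TB, TT, tnum, div_self tt'_sub_inv_ne_zero, div_one, sub_add_cancel]

end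

theorem baxterised_on_wavefunction_general (N : ℕ) (i : ℕ) (hi : i + 2 ≤ N) :
    TB 0 N 1 i (tt' 0 N 1)
        ((tt' 0 N 1 * zn 0 N 1 i - (tt' 0 N 1)⁻¹ * zn 0 N 1 (i + 1)) /
          ((wv 0 N 1 0 - zn 0 N 1 i) *
            (tt' 0 N 1 * wv 0 N 1 0 - (tt' 0 N 1)⁻¹ * zn 0 N 1 (i + 1)))) =
      (tt' 0 N 1 * zn 0 N 1 i - (tt' 0 N 1)⁻¹ * zn 0 N 1 (i + 1)) *
        (1 / ((wv 0 N 1 0 - zn 0 N 1 i) * (wv 0 N 1 0 - zn 0 N 1 (i + 1))) +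
          1 / ((tt' 0 N 1 * wv 0 N 1 0 - (tt' 0 N 1)⁻¹ * zn 0 N 1 i) *
            (tt' 0 N 1 * wv 0 N 1 0 - (tt' 0 N 1)⁻¹ * zn 0 N 1 (i + 1)))) := by
  have hsucc : i + 1 < N := by omega
  have hlt : i < N := by omega
  rw [TB_tt']
  simp only [map_div₀, map_mul, map_sub, map_inv₀, sw_tt', sw_wv i Nat.zero_lt_one,
    sw_zn_self hsucc, sw_zn_succ hsucc]
  exact hecke_divided_difference_wavefunction (mul_inv_cancel₀ tt'_ne_zero)
    (zn_sub_zn_ne_zero hlt hsucc i.succ_ne_self.symm) (wv_sub_zn_ne_zero Nat.zero_lt_one hlt)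
    (wv_sub_zn_ne_zero Nat.zero_lt_one hsucc) (tt'_mul_wv_sub_ne_zero Nat.zero_lt_one hlt)
    (tt'_mul_wv_sub_ne_zero Nat.zero_lt_one hsucc)

/-- With `w = wv 0 N 1 0` a constant parameter (fixed by the `s_i`),
for all `1 ≤ i ≤ N-1` (here `0`-indexed: `i + 2 ≤ N`), the operator `T_i(1) = T_i + t⁻¹`
satisfies
`T_i(1)[Δ_t(z_i, z_{i+1}) / ((w - z_i)(t w - t⁻¹ z_{i+1}))]
  = Δ_t(z_i, z_{i+1}) (1/((w - z_i)(w - z_{i+1})) + 1/((t w - t⁻¹ z_i)(t w - t⁻¹ z_{i+1})))`,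
where `Δ_t(z_i, z_{i+1}) = t z_i - t⁻¹ z_{i+1}` and `T_i(1)` is the Baxterised operator at
`u = 1`, i.e. `t^u = t`. -/
theorem baxterised_on_wavefunction (N : ℕ) (hN : 2 ≤ N) (i : ℕ) (hi : i + 2 ≤ N) :
    TB 0 N 1 i (tt' 0 N 1)
        ((tt' 0 N 1 * zn 0 N 1 i - (tt' 0 N 1)⁻¹ * zn 0 N 1 (i + 1)) /
          ((wv 0 N 1 0 - zn 0 N 1 i) *
            (tt' 0 N 1 * wv 0 N 1 0 - (tt' 0 N 1)⁻¹ * zn 0 N 1 (i + 1)))) =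
      (tt' 0 N 1 * zn 0 N 1 i - (tt' 0 N 1)⁻¹ * zn 0 N 1 (i + 1)) *
        (1 / ((wv 0 N 1 0 - zn 0 N 1 i) * (wv 0 N 1 0 - zn 0 N 1 (i + 1))) +
          1 / ((tt' 0 N 1 * wv 0 N 1 0 - (tt' 0 N 1)⁻¹ * zn 0 N 1 i) *
            (tt' 0 N 1 * wv 0 N 1 0 - (tt' 0 N 1)⁻¹ * zn 0 N 1 (i + 1)))) :=
  baxterised_on_wavefunction_general N i hi

end
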